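/- arXiv:2510.05380 — 3 statements merged into one kernel-verified Lean document; each statement's English description precedes it below -/
import Mathlib

section
/- Let A be a finite poset and let a ∈ A be a linear point. Set B = A∖{a} with the induced order. Then c_A(a) = 0, and c_A(b) = c_B(b) for every b ∈ A with b ≠ a. -/
-- `μ` is the Möbius function of the finite poset `P` (characterized by: `μ x y = 0` when
-- `¬ y ≤ x`, and `∑_{b : c ≤ b ≤ a} μ b c = δ_{a,c}` for all `c ≤ a`).
open Classical in
def IsMobiusFn {P : Type*} [PartialOrder P] [Fintype P] (μ : P → P → ℤ) : Prop :=
  (∀ x y : P, ¬ y ≤ x → μ x y = 0) ∧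
  (∀ a c : P, c ≤ a →
    (∑ b ∈ Finset.univ.filter (fun b => c ≤ b ∧ b ≤ a), μ b c) = if a = c then 1 else 0)

-- `c_P(x) = ∑_{y ∈ P, y ≥ x} μ_P(y, x)`.
open Classical in
noncomputable def coefCFn {P : Type*} [PartialOrder P] [Fintype P] (μ : P → P → ℤ) (x : P) : ℤ :=
  ∑ y ∈ Finset.univ.filter (fun y => x ≤ y), μ y x

open Classical in
theorem mob_unique {P : Type*} [PartialOrder P] [Fintype P] {μ : P → P → ℤ}
    (hμ : IsMobiusFn μ) (c : P) (f : P → ℤ)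
    (hf0 : ∀ y, ¬ c ≤ y → f y = 0)
    (hf : ∀ y, c ≤ y → (∑ b ∈ Finset.univ.filter (fun b => c ≤ b ∧ b ≤ y), f b)
      = if y = c then 1 else 0) :
    ∀ y, μ y c = f y := by
  have : WellFoundedLT P := Finite.to_wellFoundedLT
  have key : ∀ y, c ≤ y → μ y c = f y := by
    intro y
    induction y using WellFoundedLT.induction with
    | _ y ih =>
      intro hcy
      have h1 := hμ.2 y c hcy
      have h2 := hf y hcy
      set s := Finset.univ.filter (fun b => c ≤ b ∧ b ≤ y) with hs
      have hy : y ∈ s := by simp [hs, hcy]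
      rw [← Finset.add_sum_erase s _ hy] at h1 h2
      have heq : ∑ b ∈ s.erase y, μ b c = ∑ b ∈ s.erase y, f b := by
        apply Finset.sum_congr rfl
        intro b hb
        simp only [hs, Finset.mem_erase, Finset.mem_filter] at hb
        exact ih b (lt_of_le_of_ne hb.2.2.2 hb.1) hb.2.2.1
      omega
  intro y
  by_cases hcy : c ≤ y
  · exact key y hcy
  · rw [hμ.1 y c hcy, hf0 y hcy]

open Classical in
theorem mu_at_linear {A : Type*} [PartialOrder A] [Fintype A]
    (a aUp : A) (h1 : a < aUp) (h2 : ∀ b : A, a < b → aUp ≤ b)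
    (μA : A → A → ℤ) (hμA : IsMobiusFn μA) :
    ∀ y, μA y a = (if y = a then 1 else 0) + (if y = aUp then -1 else 0) := by
  apply mob_unique hμA a
  · intro y hy
    have h3 : y ≠ a := by rintro rfl; exact hy le_rfl
    have h4 : y ≠ aUp := by rintro rfl; exact hy h1.le
    simp [h3, h4]
  · intro y hay
    rw [Finset.sum_add_distrib, Finset.sum_ite_eq' _ a, Finset.sum_ite_eq' _ aUp]
    have ha : a ∈ Finset.univ.filter (fun b => a ≤ b ∧ b ≤ y) := by simp [hay]
    by_cases hy : y = a
    · have hnup : aUp ∉ Finset.univ.filter (fun b => a ≤ b ∧ b ≤ y) := by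
        simp only [Finset.mem_filter, Finset.mem_univ, true_and, not_and]
        intro _ hle
        rw [hy] at hle
        exact absurd hle (not_le_of_gt h1)
      simp [ha, hnup, hy]
      intro _
      exact not_le_of_gt h1
    · have haUp : aUp ∈ Finset.univ.filter (fun b => a ≤ b ∧ b ≤ y) := by
        simp [h1.le, h2 y (lt_of_le_of_ne hay (Ne.symm hy))]
      simp [ha, haUp, hy]

open Classical in
theorem split_sum {A : Type*} [Fintype A] (a : A) (f : A → ℤ) :
    ∑ i, f i = f a + ∑ i : {x : A // x ≠ a}, f i := by
  rw [Fintype.sum_eq_add_sum_compl a f]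
  rw [Finset.sum_subtype (p := fun x => x ≠ a) ({a}ᶜ : Finset A) (by intro x; simp) f]

open Classical in
theorem muB_eq {A : Type*} [PartialOrder A] [Fintype A]
    (a aUp : A) (h1 : a < aUp) (h2 : ∀ b : A, a < b → aUp ≤ b)
    (μA : A → A → ℤ) (hμA : IsMobiusFn μA)
    (μB : {b : A // b ≠ a} → {b : A // b ≠ a} → ℤ) (hμB : IsMobiusFn μB)
    (c : {b : A // b ≠ a}) :
    ∀ y : {b : A // b ≠ a},
      μB y c = μA y.val c.val + (if y.val = aUp then μA a c.val else 0) := by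
  set m := μA a c.val with hm
  apply mob_unique hμB c
  · intro y hy
    have hy' : ¬ (c : A) ≤ (y : A) := fun h => hy (Subtype.coe_le_coe.mp h)
    rw [hμA.1 _ _ hy']
    by_cases hup : y.val = aUp
    · have hca : ¬ (c : A) ≤ a := fun h => hy' (by rw [hup]; exact h.trans h1.le)
      rw [hm, hμA.1 _ _ hca]
      simp
    · simp [hup]
  · intro y hcy
    have hcy' : (c : A) ≤ (y : A) := Subtype.coe_le_coe.mpr hcy
    have hA := hμA.2 y.val c.val hcy'
    set u : {b : A // b ≠ a} := ⟨aUp, h1.ne'⟩ with hu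
    -- rewrite LHS
    rw [Finset.sum_filter]
    have step1 : ∀ b : {b : A // b ≠ a},
        (if c ≤ b ∧ b ≤ y then (μA b.val c.val + (if b.val = aUp then m else 0)) else 0)
        = (if (c : A) ≤ (b : A) ∧ (b : A) ≤ (y : A) then μA b.val c.val else 0)
          + (if b = u then (if c ≤ u ∧ u ≤ y then m else 0) else 0) := by
      intro b
      by_cases hb : b = u
      · rw [hb]
        by_cases hP : c ≤ u ∧ u ≤ y
        · have hP' : (c : A) ≤ (u : A) ∧ (u : A) ≤ (y : A) :=
            ⟨Subtype.coe_le_coe.mpr hP.1, Subtype.coe_le_coe.mpr hP.2⟩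
          rw [if_pos hP, if_pos hP', if_pos hP]
          simp [hu]
        · have hP' : ¬((c : A) ≤ (u : A) ∧ (u : A) ≤ (y : A)) := by
            intro h
            exact hP ⟨Subtype.coe_le_coe.mp h.1, Subtype.coe_le_coe.mp h.2⟩
          rw [if_neg hP, if_neg hP', if_neg hP]
          simp
      · have hbv : (b : A) ≠ aUp := fun h => hb (Subtype.ext h)
        have hiff : (c ≤ b ∧ b ≤ y) ↔ ((c : A) ≤ (b : A) ∧ (b : A) ≤ (y : A)) := by
          constructor
          · exact fun h => ⟨Subtype.coe_le_coe.mpr h.1, Subtype.coe_le_coe.mpr h.2⟩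
          · exact fun h => ⟨Subtype.coe_le_coe.mp h.1, Subtype.coe_le_coe.mp h.2⟩
        by_cases hP : c ≤ b ∧ b ≤ y
        · simp [hP, hiff.mp hP, hbv, hb]
        · simp [hP, (not_iff_not.mpr hiff).mp hP, hb]
    rw [Finset.sum_congr rfl (fun b _ => step1 b), Finset.sum_add_distrib,
      Finset.sum_ite_eq' Finset.univ u]
    -- first sum via A
    have hsplit := split_sum a (fun x : A => if (c : A) ≤ x ∧ x ≤ (y : A) then μA x c.val else 0)
    rw [← Finset.sum_filter] at hsplit
    rw [hA] at hsplit
    have e1 : ∑ b : {b : A // b ≠ a},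
        (if (c : A) ≤ (b : A) ∧ (b : A) ≤ (y : A) then μA b.val c.val else 0)
        = (if (y : A) = (c : A) then 1 else 0) - (if (c:A) ≤ a ∧ a ≤ (y:A) then m else 0) := by
      rw [hm]
      omega
    rw [e1]
    simp only [Finset.mem_univ, if_true]
    have key : (if (c:A) ≤ a ∧ a ≤ (y:A) then m else 0) = (if c ≤ u ∧ u ≤ y then m else 0) := by
      by_cases hca : (c : A) ≤ a
      · have hcu : c ≤ u := Subtype.coe_le_coe.mp (show (c:A) ≤ (u:A) from hca.trans h1.le)
        have hiff2 : a ≤ (y : A) ↔ u ≤ y := by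
          constructor
          · intro h
            exact Subtype.coe_le_coe.mp
              (show (u:A) ≤ (y:A) from h2 _ (lt_of_le_of_ne h (Ne.symm y.prop)))
          · intro h
            exact h1.le.trans (Subtype.coe_le_coe.mpr h)
        by_cases hay : a ≤ (y : A)
        · simp [hca, hay, hcu, hiff2.mp hay]
        · have : ¬ u ≤ y := fun h => hay (hiff2.mpr h)
          simp [hay, this]
      · have hm0 : m = 0 := hμA.1 a c.val hca
        simp [hca, hm0]
    rw [key]
    simp only [Subtype.coe_inj]
    ring_nf

open Classical in
-- Let `A` be a finite poset and `a ∈ A` a linear point (with witness `aUp`).  Let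
-- `B = A∖{a}` with the induced order.  Then `c_A(a) = 0`, and `c_A(b) = c_B(b)` for every
-- `b ∈ A` with `b ≠ a`.
theorem stmt8 {A : Type*} [PartialOrder A] [Fintype A]
    (a aUp : A) (h1 : a < aUp) (h2 : ∀ b : A, a < b → aUp ≤ b)
    (μA : A → A → ℤ) (hμA : IsMobiusFn μA)
    (μB : {b : A // b ≠ a} → {b : A // b ≠ a} → ℤ) (hμB : IsMobiusFn μB) :
    coefCFn μA a = 0 ∧
    ∀ b : {b : A // b ≠ a}, coefCFn μA (b : A) = coefCFn μB b := by
  have hformula := mu_at_linear a aUp h1 h2 μA hμA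
  constructor
  · unfold coefCFn
    rw [Finset.sum_congr rfl (fun y _ => hformula y), Finset.sum_add_distrib,
      Finset.sum_ite_eq' _ a, Finset.sum_ite_eq' _ aUp]
    have ha : a ∈ Finset.univ.filter (fun y => a ≤ y) := by simp
    have hup : aUp ∈ Finset.univ.filter (fun y => a ≤ y) := by simp [h1.le]
    simp [ha, hup]
  · intro b
    set m := μA a b.val with hm
    set u : {x : A // x ≠ a} := ⟨aUp, h1.ne'⟩ with hu
    have hB := muB_eq a aUp h1 h2 μA hμA μB hμB b
    unfold coefCFn
    rw [Finset.sum_congr rfl (fun y _ => hB y)]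
    rw [Finset.sum_filter, Finset.sum_filter]
    have step1 : ∀ y : {x : A // x ≠ a},
        (if b ≤ y then (μA y.val b.val + (if y.val = aUp then m else 0)) else 0)
        = (if (b : A) ≤ (y : A) then μA y.val b.val else 0)
          + (if y = u then (if b ≤ u then m else 0) else 0) := by
      intro y
      by_cases hy : y = u
      · rw [hy]
        by_cases hP : b ≤ u
        · rw [if_pos hP, if_pos (Subtype.coe_le_coe.mpr hP), if_pos hP]
          simp [hu]
        · have : ¬ (b : A) ≤ (u : A) := fun h => hP (Subtype.coe_le_coe.mp h)
          rw [if_neg hP, if_neg this, if_neg hP]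
          simp
      · have hyv : (y : A) ≠ aUp := fun h => hy (Subtype.ext h)
        by_cases hP : b ≤ y
        · simp [hP, Subtype.coe_le_coe.mpr hP, hyv, hy]
        · have : ¬ (b : A) ≤ (y : A) := fun h => hP (Subtype.coe_le_coe.mp h)
          simp [hP, this, hy]
    rw [Finset.sum_congr rfl (fun y _ => step1 y), Finset.sum_add_distrib,
      Finset.sum_ite_eq' Finset.univ u]
    have hsplit := split_sum a (fun x : A => if (b : A) ≤ x then μA x b.val else 0)
    rw [hsplit]
    simp only [Finset.mem_univ, if_true]
    have key : (if (b : A) ≤ a then μA a b.val else 0) = (if b ≤ u then m else 0) := by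
      by_cases hba : (b : A) ≤ a
      · have hbu : b ≤ u := Subtype.coe_le_coe.mp (show (b:A) ≤ (u:A) from hba.trans h1.le)
        simp [hba, hbu, hm]
      · have hm0 : m = 0 := hμA.1 a b.val hba
        by_cases hbu : b ≤ u <;> simp [hba, hbu, hm0, hm]
    rw [key]
    ring_nf
end

section
/- Let A be a finite poset and let a ∈ A be a colinear point with witness a↓. Set B = A∖{a} with the induced order. Then c_B(a↓) = c_A(a↓) + c_A(a), and c_B(b) = c_A(b) for every b ∈ B with b ≠ a↓. -/
/-!
Since every element below `a` other than `a` lies below `a↓`, the interval `(-∞, a]` is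
`(-∞, a↓] ∪ {a}`, so the Möbius recursion gives `μ_A(a, c) = -[c = a↓]` for `c ≠ a`.
Consequently `μ_B(y, c) = μ_A(y, c) + [c = a↓] μ_A(y, a)` satisfies the recursion on `B`,
which determines `μ_B`. As `μ` vanishes off the order, `c_P(x) = ∑_y μ_P(y, x)`, and summing
the formula for `μ_B` over `y ≠ a` yields `c_B(b) = c_A(b) + [b = a↓] c_A(a)`.
-/

open Classical Finset

theorem Fintype.sum_subtype_ne_eq_sub {α M : Type*} [Fintype α] [AddCommGroup M] (a : α)
    (f : α → M) : ∑ b : {b // b ≠ a}, f b = ∑ x, f x - f a := by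
  rw [← Finset.sum_subtype (univ.erase a) (by simp) f, sum_erase_eq_sub (mem_univ a)]

theorem Finset.sum_filter_subtype_ne_eq_sub {α M : Type*} [Fintype α] [AddCommGroup M] (a : α)
    (p : α → Prop) (f : α → M) :
    ∑ b ∈ univ.filter (fun b : {b // b ≠ a} => p b), f b =
      ∑ x ∈ univ.filter p, f x - if p a then f a else 0 := by
  rw [sum_filter, sum_filter, Fintype.sum_subtype_ne_eq_sub a fun x => if p x then f x else 0]

section Mobius

variable {P : Type*} [PartialOrder P] [Fintype P] {μ : P → P → ℤ}

theorem sum_Icc_eq_sum_Iic_of_vanishing (hμ : ∀ x y : P, ¬ y ≤ x → μ x y = 0) (x c : P) :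
    ∑ b ∈ univ.filter (fun b => c ≤ b ∧ b ≤ x), μ b c = ∑ b ∈ univ.filter (· ≤ x), μ b c := by
  calc ∑ b ∈ univ.filter (fun b => c ≤ b ∧ b ≤ x), μ b c
      = ∑ b ∈ (univ.filter (· ≤ x)).filter (c ≤ ·), μ b c := by simp only [filter_filter, and_comm]
    _ = _ := sum_filter_of_ne fun b _ hb => not_imp_comm.1 (hμ b c) hb

theorem isMobiusFn_iff_sum_Iic :
    IsMobiusFn μ ↔ (∀ x y : P, ¬ y ≤ x → μ x y = 0) ∧
      ∀ x c : P, ∑ b ∈ univ.filter (· ≤ x), μ b c = if x = c then 1 else 0 := by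
  refine and_congr_right fun hμ => ⟨fun h x c => ?_, fun h x c _ => ?_⟩
  · by_cases hcx : c ≤ x
    · rw [← sum_Icc_eq_sum_Iic_of_vanishing hμ, h x c hcx]
    · rw [if_neg (fun hxc => hcx hxc.ge), ← sum_Icc_eq_sum_Iic_of_vanishing hμ]
      exact sum_eq_zero fun b hb => absurd ((mem_filter.1 hb).2.1.trans (mem_filter.1 hb).2.2) hcx
  · rw [sum_Icc_eq_sum_Iic_of_vanishing hμ, h]

theorem IsMobiusFn.sum_Iic (hμ : IsMobiusFn μ) (x c : P) :
    ∑ b ∈ univ.filter (· ≤ x), μ b c = if x = c then 1 else 0 :=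
  (isMobiusFn_iff_sum_Iic.1 hμ).2 x c

theorem IsMobiusFn.apply_self (hμ : IsMobiusFn μ) (x : P) : μ x x = 1 := by
  have h := hμ.2 x x le_rfl
  have hx : univ.filter (fun b => x ≤ b ∧ b ≤ x) = {x} := by
    ext b
    simp [le_antisymm_iff, and_comm]
  rwa [if_pos rfl, hx, sum_singleton] at h

theorem IsMobiusFn.unique {ν : P → P → ℤ} (hμ : IsMobiusFn μ) (hν : IsMobiusFn ν) : μ = ν := by
  funext x c
  induction x using WellFoundedLT.induction with
  | _ x ih =>
    have hx : x ∈ univ.filter (· ≤ x) := by simp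
    have h := (hμ.sum_Iic x c).trans (hν.sum_Iic x c).symm
    have hlt : ∀ b ∈ (univ.filter (· ≤ x)).erase x, b < x := fun b hb =>
      lt_of_le_of_ne (mem_filter.1 (mem_erase.1 hb).2).2 (mem_erase.1 hb).1
    rwa [← add_sum_erase _ _ hx, ← add_sum_erase _ _ hx,
      sum_congr rfl fun b hb => ih b (hlt b hb), add_left_inj] at h

theorem IsMobiusFn.coefCFn_eq_sum (hμ : IsMobiusFn μ) (x : P) : coefCFn μ x = ∑ y, μ y x :=
  sum_filter_of_ne fun y _ hy => not_imp_comm.1 (hμ.1 y x) hy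

end Mobius

section Colinear

variable {A : Type*} [PartialOrder A] [Fintype A] {μ : A → A → ℤ} {a aDn : A}

theorem filter_le_eq_insert_of_colinear (h1 : aDn < a) (h2 : ∀ b : A, b < a → b ≤ aDn) :
    univ.filter (· ≤ a) = insert a (univ.filter (· ≤ aDn)) := by
  ext b
  simp only [mem_filter, mem_univ, true_and, mem_insert]
  refine ⟨fun hba => ?_, ?_⟩
  · exact (eq_or_ne b a).imp id fun hne => h2 b (lt_of_le_of_ne hba hne)
  · rintro (rfl | hb)
    exacts [le_rfl, hb.trans h1.le]

theorem IsMobiusFn.apply_colinear (hμ : IsMobiusFn μ) (h1 : aDn < a)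
    (h2 : ∀ b : A, b < a → b ≤ aDn) {c : A} (hc : c ≠ a) :
    μ a c = -if c = aDn then 1 else 0 := by
  have h := hμ.sum_Iic a c
  rw [filter_le_eq_insert_of_colinear h1 h2, sum_insert (by simpa using h1.not_ge),
    hμ.sum_Iic, if_neg hc.symm] at h
  split_ifs at h ⊢ <;> grind

variable (μ a aDn) in
noncomputable def mobiusErase (y c : {b : A // b ≠ a}) : ℤ :=
  μ y c + if (c : A) = aDn then μ y a else 0

theorem isMobiusFn_mobiusErase (hμ : IsMobiusFn μ) (h1 : aDn < a)
    (h2 : ∀ b : A, b < a → b ≤ aDn) : IsMobiusFn (mobiusErase μ a aDn) := by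
  refine isMobiusFn_iff_sum_Iic.2 ⟨fun y c hcy => ?_, fun y c => ?_⟩
  · rw [mobiusErase, hμ.1 _ _ hcy, zero_add]
    split_ifs with hc
    · exact hμ.1 _ _ fun hay => hcy (show (c : A) ≤ y from hc ▸ h1.le.trans hay)
    · rfl
  · have hIic : univ.filter (· ≤ y) = univ.filter (fun b : {b : A // b ≠ a} => (b : A) ≤ y) := rfl
    -- Deleting `a` drops `μ a c = -[c = aDn]` from the first sum and `μ a a = 1` from the
    -- second; the two losses cancel.
    simp only [hIic, mobiusErase, sum_add_distrib, sum_ite_irrel, sum_const_zero]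
    rw [sum_filter_subtype_ne_eq_sub a (· ≤ (y : A)) (μ · c),
      sum_filter_subtype_ne_eq_sub a (· ≤ (y : A)) (μ · a),
      hμ.sum_Iic, hμ.sum_Iic, hμ.apply_colinear h1 h2 c.2, hμ.apply_self, if_neg y.2,
      Subtype.ext_iff]
    split_ifs <;> simp_all

theorem IsMobiusFn.coefCFn_mobiusErase (hμ : IsMobiusFn μ) (h1 : aDn < a)
    (h2 : ∀ b : A, b < a → b ≤ aDn) (b : {b : A // b ≠ a}) :
    coefCFn (mobiusErase μ a aDn) b = coefCFn μ b + if (b : A) = aDn then coefCFn μ a else 0 := by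
  simp only [(isMobiusFn_mobiusErase hμ h1 h2).coefCFn_eq_sum, hμ.coefCFn_eq_sum, mobiusErase,
    sum_add_distrib, sum_ite_irrel, sum_const_zero, Fintype.sum_subtype_ne_eq_sub a (μ · b),
    Fintype.sum_subtype_ne_eq_sub a (μ · a), hμ.apply_colinear h1 h2 b.2, hμ.apply_self]
  split_ifs <;> ring

end Colinear

open Classical in
theorem stmt9 {A : Type*} [PartialOrder A] [Fintype A]
    (a aDn : A) (h1 : aDn < a) (h2 : ∀ b : A, b < a → b ≤ aDn)
    (μA : A → A → ℤ) (hμA : IsMobiusFn μA)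
    (μB : {b : A // b ≠ a} → {b : A // b ≠ a} → ℤ) (hμB : IsMobiusFn μB) :
    coefCFn μB ⟨aDn, h1.ne⟩ = coefCFn μA aDn + coefCFn μA a ∧
    ∀ b : {b : A // b ≠ a}, (b : A) ≠ aDn → coefCFn μB b = coefCFn μA (b : A) := by
  rw [hμB.unique (isMobiusFn_mobiusErase hμA h1 h2)]
  refine ⟨?_, fun b hb => ?_⟩
  · simpa using hμA.coefCFn_mobiusErase h1 h2 ⟨aDn, h1.ne⟩
  · simpa [hb] using hμA.coefCFn_mobiusErase h1 h2 b
end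

section
/- Let E and F be nonempty finite sets, p : E → F a surjection, f : E → ℝ, and P a strictly positive probability distribution on F. On the set K = { Q ∈ P(E) : Σ_{x : p(x) = y} Q(x) = P(y) for all y ∈ F }, consider G(Q) = Σ_{x∈E} Q(x) f(x) − Σ_{y∈F} P(y) S(Q(·|y)), where Q(x|y) = Q(x)/P(y) if p(x) = y and 0 otherwise, and S(q) = −Σ_x q(x) ln q(x) with 0 ln 0 = 0. Then G attains its minimum over K uniquely at Q*(x) = P(p(x)) · e^{−f(x)} / Σ_{z : p(z) = p(x)} e^{−f(z)}, and the minimum value is −Σ_{y∈F} P(y) ln Σ_{z : p(z) = y} e^{−f(z)}. -/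
-- Shannon entropy `S(q) = −∑_x q x ln (q x)` (with `0 ln 0 = 0`, as `Real.log 0 = 0`).
noncomputable def entropy {α : Type*} [Fintype α] (q : α → ℝ) : ℝ :=
  -∑ x, q x * Real.log (q x)

-- The conditional kernel `Q(x|y) = Q(x)/P(y)` if `p x = y`, and `0` otherwise.
noncomputable def condKer {E F : Type} [DecidableEq F] (p : E → F) (P : F → ℝ)
    (Q : E → ℝ) (y : F) (x : E) : ℝ :=
  if p x = y then Q x / P y else 0

/-! The free energy `G` restricted to `K` is the relative entropy `∑ₓ Q x log (Q x / Q* x)` minus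
the constant `∑_y P y log Z y`, where `Z y = ∑_{p z = y} e^{−f z}`: indeed `log Q* x` differs from
`log P (p x) − f x` only by `log Z (p x)`, and `Q` and `Q*` have the same fiber masses `P`.
Gibbs' inequality (`q log (q/r) ≥ q − r`, with equality only at `q = r`) then makes `Q*` the unique
minimiser. -/

section FreeEnergy

open Finset Real InformationTheory

section Gibbs

lemma mul_log_div_eq_mul_klFun_add (q : ℝ) {r : ℝ} (hr : r ≠ 0) :
    q * log (q / r) = r * klFun (q / r) + (q - r) := by
  rw [klFun_apply]
  field_simp
  ring

variable {ι : Type*} [Fintype ι] {q r : ι → ℝ}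

lemma sum_mul_log_div_eq_sum_mul_klFun (hr : ∀ i, 0 < r i) (hsum : ∑ i, q i = ∑ i, r i) :
    ∑ i, q i * log (q i / r i) = ∑ i, r i * klFun (q i / r i) := by
  simp only [fun i => mul_log_div_eq_mul_klFun_add (q i) (hr i).ne', sum_add_distrib,
    sum_sub_distrib, hsum, sub_self, add_zero]

theorem sum_mul_log_div_nonneg (hq : ∀ i, 0 ≤ q i) (hr : ∀ i, 0 < r i)
    (hsum : ∑ i, q i = ∑ i, r i) : 0 ≤ ∑ i, q i * log (q i / r i) := by
  rw [sum_mul_log_div_eq_sum_mul_klFun hr hsum]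
  exact sum_nonneg fun i _ => mul_nonneg (hr i).le (klFun_nonneg (div_nonneg (hq i) (hr i).le))

theorem eq_of_sum_mul_log_div_eq_zero (hq : ∀ i, 0 ≤ q i) (hr : ∀ i, 0 < r i)
    (hsum : ∑ i, q i = ∑ i, r i) (h : ∑ i, q i * log (q i / r i) = 0) : q = r := by
  have hqr : ∀ i, 0 ≤ q i / r i := fun i => div_nonneg (hq i) (hr i).le
  rw [sum_mul_log_div_eq_sum_mul_klFun hr hsum, sum_eq_zero_iff_of_nonneg fun i _ =>
    mul_nonneg (hr i).le (klFun_nonneg (hqr i))] at h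
  funext i
  have hi := h i (mem_univ i)
  rw [mul_eq_zero, or_iff_right (hr i).ne', klFun_eq_zero_iff (hqr i),
    div_eq_one_iff_eq (hr i).ne'] at hi
  exact hi

end Gibbs

section Fibers

variable {E F : Type} [Fintype E] [DecidableEq F] (p : E → F)

lemma sum_mul_comp_eq_of_sum_fiber_eq [Fintype F] {Q : E → ℝ} {P : F → ℝ}
    (hQ : ∀ y, ∑ x ∈ univ.filter (fun x => p x = y), Q x = P y) (g : F → ℝ) :
    ∑ x, Q x * g (p x) = ∑ y, P y * g y := by
  rw [← sum_fiberwise univ p]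
  refine sum_congr rfl fun y _ => ?_
  rw [← hQ y, sum_mul]
  exact sum_congr rfl fun x hx => by rw [(mem_filter.mp hx).2]

lemma sum_mul_entropy_condKer [Fintype F] {P : F → ℝ} (hP : ∀ y, P y ≠ 0) (Q : E → ℝ) :
    ∑ y, P y * entropy (condKer p P Q y) = -∑ x, Q x * log (Q x / P (p x)) := by
  rw [← sum_fiberwise univ p, ← sum_neg_distrib]
  refine sum_congr rfl fun y _ => ?_
  rw [entropy, mul_neg, mul_sum, sum_filter]
  refine congrArg _ (sum_congr rfl fun x _ => ?_)
  unfold condKer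
  split_ifs with hx
  · rw [hx, ← mul_assoc, mul_div_cancel₀ _ (hP y)]
  · simp

variable (f : E → ℝ)

noncomputable def fiberPartition (y : F) : ℝ :=
  ∑ z ∈ univ.filter (fun z => p z = y), exp (-f z)

lemma fiberPartition_pos {p : E → F} (hp : Function.Surjective p) (y : F) :
    0 < fiberPartition p f y := by
  obtain ⟨x, rfl⟩ := hp y
  exact sum_pos' (fun z _ => (exp_pos _).le) ⟨x, by simp, exp_pos _⟩

noncomputable def gibbsState (P : F → ℝ) (x : E) : ℝ :=
  P (p x) * exp (-f x) / fiberPartition p f (p x)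

variable {p} (hp : Function.Surjective p) {P : F → ℝ}
include hp

lemma gibbsState_pos (hP : ∀ y, 0 < P y) (x : E) : 0 < gibbsState p f P x :=
  div_pos (mul_pos (hP _) (exp_pos _)) (fiberPartition_pos f hp _)

lemma sum_fiber_gibbsState (y : F) :
    ∑ x ∈ univ.filter (fun x => p x = y), gibbsState p f P x = P y := by
  have hZ := (fiberPartition_pos f hp y).ne'
  rw [sum_congr rfl fun x hx => by rw [gibbsState, (mem_filter.mp hx).2],
    ← sum_div, ← mul_sum]
  exact mul_div_cancel_right₀ (P y) hZ

lemma mul_log_div_gibbsState (hP : ∀ y, 0 < P y) (q : ℝ) (x : E) :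
    q * log (q / gibbsState p f P x)
      = q * (f x + log (q / P (p x))) + q * log (fiberPartition p f (p x)) := by
  rcases eq_or_ne q 0 with rfl | hq
  · simp
  have hPx := (hP (p x)).ne'
  have hZ := (fiberPartition_pos f hp (p x)).ne'
  rw [log_div hq (gibbsState_pos f hp hP x).ne', gibbsState, log_div hq hPx,
    log_div (mul_ne_zero hPx (exp_pos _).ne') hZ, log_mul hPx (exp_pos _).ne', log_exp]
  ring

theorem freeEnergy_eq_sum_mul_log_div_gibbsState [Fintype F] (hP : ∀ y, 0 < P y) {Q : E → ℝ}
    (hQ : ∀ y, ∑ x ∈ univ.filter (fun x => p x = y), Q x = P y) :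
    ∑ x, Q x * f x - ∑ y, P y * entropy (condKer p P Q y)
      = ∑ x, Q x * log (Q x / gibbsState p f P x)
        - ∑ y, P y * log (fiberPartition p f y) := by
  rw [sum_mul_entropy_condKer p fun y => (hP y).ne', ← sum_mul_comp_eq_of_sum_fiber_eq p hQ,
    ← sum_sub_distrib, sub_neg_eq_add, ← sum_add_distrib]
  exact sum_congr rfl fun x _ => by rw [mul_log_div_gibbsState f hp hP]; ring

end Fibers

end FreeEnergy

open Classical in
-- Let `E`, `F` be nonempty finite sets, `p : E → F` a surjection, `f : E → ℝ`, and `P` a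
-- strictly positive probability distribution on `F`.  On
-- `K = {Q ∈ P(E) : ∑_{x, p x = y} Q x = P y for all y}` consider
-- `G(Q) = ∑_x Q x f x − ∑_y P y S(Q(·|y))`.  Then `G` attains its minimum over `K` uniquely
-- at `Q*(x) = P (p x) e^{−f x} / ∑_{z, p z = p x} e^{−f z}`, with minimum value
-- `−∑_y P y ln ∑_{z, p z = y} e^{−f z}`.
theorem stmt16_general {E F : Type} [Fintype E] [Fintype F]
    [DecidableEq F]
    (p : E → F) (hp : Function.Surjective p) (f : E → ℝ)
    (P : F → ℝ) (hPpos : ∀ y, 0 < P y) (hPsum : ∑ y, P y = 1)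
    (K : Set (E → ℝ))
    (hK : K = {Q : E → ℝ | (∀ x, 0 ≤ Q x) ∧ (∑ x, Q x) = 1 ∧
      ∀ y : F, (∑ x ∈ Finset.univ.filter (fun x => p x = y), Q x) = P y})
    (G : (E → ℝ) → ℝ)
    (hG : ∀ Q : E → ℝ, G Q = (∑ x, Q x * f x) - ∑ y, P y * entropy (condKer p P Q y))
    (Qstar : E → ℝ)
    (hQstar : ∀ x : E, Qstar x = P (p x) * Real.exp (-f x) /
      ∑ z ∈ Finset.univ.filter (fun z => p z = p x), Real.exp (-f z)) :
    Qstar ∈ K ∧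
    (∀ Q ∈ K, G Qstar ≤ G Q) ∧
    (∀ Q ∈ K, G Q = G Qstar → Q = Qstar) ∧
    G Qstar = -∑ y, P y * Real.log (∑ z ∈ Finset.univ.filter (fun z => p z = y),
      Real.exp (-f z)) := by
  obtain rfl : Qstar = gibbsState p f P := funext hQstar
  have hpos := gibbsState_pos f hp hPpos
  have hfiber := sum_fiber_gibbsState (P := P) f hp
  have hsum : ∑ x, gibbsState p f P x = 1 := by
    rw [← Finset.sum_fiberwise Finset.univ p, ← hPsum]
    exact Finset.sum_congr rfl fun y _ => hfiber y
  have hstarK : gibbsState p f P ∈ K := hK ▸ ⟨fun x => (hpos x).le, hsum, hfiber⟩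
  have hGK : ∀ Q : E → ℝ, (∀ y, ∑ x ∈ Finset.univ.filter (fun x => p x = y), Q x = P y) →
      G Q = ∑ x, Q x * Real.log (Q x / gibbsState p f P x)
        - ∑ y, P y * Real.log (fiberPartition p f y) := fun Q hQ => by
    rw [hG, freeEnergy_eq_sum_mul_log_div_gibbsState f hp hPpos hQ]
  have hGstar : G (gibbsState p f P) = -∑ y, P y * Real.log (fiberPartition p f y) := by
    rw [hGK _ hfiber, ← zero_sub]
    simp [div_self (hpos _).ne']
  refine ⟨hstarK, fun Q hQ => ?_, fun Q hQ hQG => ?_, hGstar⟩ <;> rw [hK] at hQ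
  · rw [hGstar, hGK Q hQ.2.2]
    linarith [sum_mul_log_div_nonneg hQ.1 hpos (hQ.2.1.trans hsum.symm)]
  · refine eq_of_sum_mul_log_div_eq_zero hQ.1 hpos (hQ.2.1.trans hsum.symm) ?_
    linarith [hGK Q hQ.2.2]

open Classical in
theorem stmt16 {E F : Type} [Fintype E] [Fintype F] [Nonempty E] [Nonempty F]
    [DecidableEq E] [DecidableEq F]
    (p : E → F) (hp : Function.Surjective p) (f : E → ℝ)
    (P : F → ℝ) (hPpos : ∀ y, 0 < P y) (hPsum : ∑ y, P y = 1)
    (K : Set (E → ℝ))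
    (hK : K = {Q : E → ℝ | (∀ x, 0 ≤ Q x) ∧ (∑ x, Q x) = 1 ∧
      ∀ y : F, (∑ x ∈ Finset.univ.filter (fun x => p x = y), Q x) = P y})
    (G : (E → ℝ) → ℝ)
    (hG : ∀ Q : E → ℝ, G Q = (∑ x, Q x * f x) - ∑ y, P y * entropy (condKer p P Q y))
    (Qstar : E → ℝ)
    (hQstar : ∀ x : E, Qstar x = P (p x) * Real.exp (-f x) /
      ∑ z ∈ Finset.univ.filter (fun z => p z = p x), Real.exp (-f z)) :
    Qstar ∈ K ∧
    (∀ Q ∈ K, G Qstar ≤ G Q) ∧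
    (∀ Q ∈ K, G Q = G Qstar → Q = Qstar) ∧
    G Qstar = -∑ y, P y * Real.log (∑ z ∈ Finset.univ.filter (fun z => p z = y),
      Real.exp (-f z)) :=
  stmt16_general p hp f P hPpos hPsum K hK G hG Qstar hQstar
end
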